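/- arXiv:1112.6302 — 3 statements merged into one kernel-verified Lean document; each statement's English description precedes it below -/
import Mathlib

section
/- Let n and k be real numbers with k > n ≥ 3 and let θ > 0. If λ₁ is a real number satisfying λ₁ ≥ ((k-2)/(k-1))·(θ²/(k-n) + n - 1), then n - 1 + θ - 2(k-2)√λ₁ < 0. -/
/-- **Appendix Proposition, conclusion.** If `k > n ≥ 3`, `θ > 0` and
`λ₁ ≥ ((k-2)/(k-1))(θ²/(k-n) + n - 1)`, then `n - 1 + θ - 2(k-2)√λ₁ < 0`. -/
theorem appendix_inequality (n k θ lambda₁ : ℝ)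
    (hk : n < k) (hn : 3 ≤ n) (hθ : 0 < θ)
    (hlam : lambda₁ ≥ (k - 2) / (k - 1) * (θ ^ 2 / (k - n) + n - 1)) :
    n - 1 + θ - 2 * (k - 2) * Real.sqrt lambda₁ < 0 := by
  have hk2 : (0:ℝ) < k - 2 := by linarith
  have hkn : (0:ℝ) < k - n := by linarith
  have hk1 : (0:ℝ) < k - 1 := by linarith
  have hpos : (0:ℝ) < n - 1 + θ := by linarith
  have hA : (k - 1) ≤ 2 * (k - 2) ^ 2 := by nlinarith
  have hd : 0 < (n-1) * (k-n) * ((k+n-4) * (2*(k-2) - (n-1)) - (n-1) * (k-n)) := by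
    have h1 : (n-1) * (k-n) < (k+n-4) * (2*(k-2) - (n-1)) := by nlinarith
    have : 0 < (n-1) * (k-n) := by nlinarith
    nlinarith
  have step1 : (n - 1 + θ) ^ 2 * (k - n) < 2 * (k - 2) * (θ ^ 2 + (n - 1) * (k - n)) := by
    nlinarith [sq_nonneg ((k+n-4)*θ - (n-1)*(k-n)), hd, mul_pos hθ hkn]
  have key : (n - 1 + θ) ^ 2 < 4 * (k - 2) ^ 2 * lambda₁ := by
    have h3 : (n - 1 + θ) ^ 2 * ((k - 1) * (k - n)) <
        4 * (k - 2) ^ 3 * (θ ^ 2 + (n - 1) * (k - n)) := by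
      have hq : 0 < θ ^ 2 + (n - 1) * (k - n) := by nlinarith
      calc (n - 1 + θ) ^ 2 * ((k - 1) * (k - n))
          = (k-1) * ((n - 1 + θ) ^ 2 * (k - n)) := by ring
        _ < (k-1) * (2 * (k - 2) * (θ ^ 2 + (n - 1) * (k - n))) := by
            exact mul_lt_mul_of_pos_left step1 hk1
        _ ≤ 2 * (k-2)^2 * (2 * (k - 2) * (θ ^ 2 + (n - 1) * (k - n))) := by
            apply mul_le_mul_of_nonneg_right hA (by positivity)
        _ = 4 * (k - 2) ^ 3 * (θ ^ 2 + (n - 1) * (k - n)) := by ring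
    have h2 : 4 * (k - 2) ^ 2 * ((k - 2) / (k - 1) * (θ ^ 2 / (k - n) + n - 1))
        = (4 * (k - 2) ^ 3 * (θ ^ 2 + (n - 1) * (k - n))) / ((k - 1) * (k - n)) := by
      field_simp
      ring
    have h4 : (n - 1 + θ) ^ 2 < 4 * (k - 2) ^ 2 * ((k - 2) / (k - 1) * (θ ^ 2 / (k - n) + n - 1)) := by
      rw [h2, lt_div_iff₀ (by positivity)]
      linarith
    have h5 : 4 * (k - 2) ^ 2 * ((k - 2) / (k - 1) * (θ ^ 2 / (k - n) + n - 1))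
        ≤ 4 * (k - 2) ^ 2 * lambda₁ := mul_le_mul_of_nonneg_left hlam (by positivity)
    linarith
  have hlampos : 0 < lambda₁ := by nlinarith [sq_nonneg (n-1+θ)]
  have hsq : (n - 1 + θ) / (2 * (k - 2)) < Real.sqrt lambda₁ := by
    rw [Real.lt_sqrt (by positivity)]
    rw [div_pow, div_lt_iff₀ (by positivity)]
    nlinarith [key]
  have := (div_lt_iff₀ (by positivity : (0:ℝ) < 2 * (k - 2))).mp hsq
  nlinarith [this]
end

section
/- Let n and k be real numbers with k > n ≥ 3 and let θ > 0. Then [4(k-2)³/((k-1)(k-n)) - 1]·θ² - 2(n-1)·θ + [4(k-2)³(n-1)/(k-1) - (n-1)²] > 0. -/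
/-- **Appendix, quadratic inequality in `θ`.** For real `k > n ≥ 3` and `θ > 0`,
`[4(k-2)³/((k-1)(k-n)) - 1] θ² - 2(n-1) θ + [4(k-2)³(n-1)/(k-1) - (n-1)²] > 0`. -/
theorem appendix_quadratic_inequality (n k θ : ℝ)
    (hk : n < k) (hn : 3 ≤ n) (hθ : 0 < θ) :
    (4 * (k - 2) ^ 3 / ((k - 1) * (k - n)) - 1) * θ ^ 2 - 2 * (n - 1) * θ +
      (4 * (k - 2) ^ 3 * (n - 1) / (k - 1) - (n - 1) ^ 2) > 0 := by
  have hs : 0 < k - n := by linarith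
  have hk3 : 0 < k - 3 := by linarith
  have hk1 : 0 < k - 1 := by linarith
  have hD : 0 < (k - 1) * (k - n) := mul_pos hk1 hs
  have hP : (k - 1) ^ 2 < 4 * (k - 2) ^ 3 := by nlinarith [sq_nonneg (k - 3), hk3]
  have ha : (k - 1) * (k - n) < 4 * (k - 2) ^ 3 := by
    nlinarith [sq_nonneg (k - 2), hk3, hs, hn]
  have hm : 0 < n - 1 := by linarith
  have key : 0 < (4 * (k - 2) ^ 3 - (k - 1) * (k - n)) * θ ^ 2
      - 2 * (n - 1) * ((k - 1) * (k - n)) * θ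
      + (n - 1) * (4 * (k - 2) ^ 3 - (n - 1) * (k - 1)) * (k - n) := by
    nlinarith [sq_nonneg ((4 * (k - 2) ^ 3 - (k - 1) * (k - n)) * θ
        - (n - 1) * ((k - 1) * (k - n))),
      mul_pos (mul_pos (mul_pos hm hs) (by nlinarith [sq_nonneg (k-2)] : (0:ℝ) < 4 * (k - 2) ^ 3))
        (by linarith : (0:ℝ) < 4 * (k - 2) ^ 3 - (k - 1) ^ 2),
      sub_pos.mpr ha]
  have heq : (4 * (k - 2) ^ 3 / ((k - 1) * (k - n)) - 1) * θ ^ 2 - 2 * (n - 1) * θ +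
      (4 * (k - 2) ^ 3 * (n - 1) / (k - 1) - (n - 1) ^ 2)
      = ((4 * (k - 2) ^ 3 - (k - 1) * (k - n)) * θ ^ 2
      - 2 * (n - 1) * ((k - 1) * (k - n)) * θ
      + (n - 1) * (4 * (k - 2) ^ 3 - (n - 1) * (k - 1)) * (k - n)) / ((k - 1) * (k - n)) := by
    field_simp
  rw [gt_iff_lt, heq]
  exact div_pos key hD
end

section
/- Let n ≥ 2 and let H = (h_{ij}) be a real symmetric n×n matrix. For any real constants k > n and c with trace(H) = c, the inequality Σ_{i,j} h_{ij}² ≥ (k/(k-1))·Σ_{j=1}^n h_{1j}² - c²/(k-n) holds. -/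
/-!
Keeping only the first row, its mirror image in the first column and the diagonal gives
`∑ h_ij² ≥ h₁₁² + 2 S + ∑_{i≠1} h_ii²` with `S = ∑_{j≠1} h_1j²`. Cauchy–Schwarz bounds the
diagonal part below by `(c - h₁₁)² / (n - 1)`, and the two-term weighted Cauchy–Schwarz
`(c - h₁₁)² / (n - 1) + c² / (k - n) ≥ h₁₁² / (k - 1)` supplies the factor `k / (k - 1)` on
`h₁₁²`, while `k / (k - 1) ≤ 2` takes care of `S`.
-/

open Finset

theorem add_sq_div_add_le_sq_div_add_sq_div {x y p q : ℝ} (hp : 0 < p) (hq : 0 < q) :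
    (x + y) ^ 2 / (p + q) ≤ x ^ 2 / p + y ^ 2 / q := by
  simpa [Fin.sum_univ_two] using
    sq_sum_div_le_sum_sq_div univ ![x, y] (g := ![p, q]) (by simp [Fin.forall_fin_two, hp, hq])

namespace Matrix

variable {ι : Type*} [Fintype ι] [DecidableEq ι]

theorem IsSymm.sq_add_two_mul_sum_sq_add_sum_sq_diag_le {H : Matrix ι ι ℝ} (hH : H.IsSymm)
    (i₀ : ι) :
    H i₀ i₀ ^ 2 + 2 * ∑ j ∈ univ.erase i₀, H i₀ j ^ 2 + ∑ j ∈ univ.erase i₀, H j j ^ 2 ≤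
      ∑ i, ∑ j, H i j ^ 2 := by
  have hrow : ∀ i ∈ univ.erase i₀, H i₀ i ^ 2 + H i i ^ 2 ≤ ∑ j, H i j ^ 2 := by
    intro i hi
    rw [← hH.apply i₀ i, ← sum_pair (f := fun j => H i j ^ 2) (ne_of_mem_erase hi).symm]
    exact sum_le_sum_of_subset_of_nonneg (subset_univ _) fun j _ _ => sq_nonneg _
  have hrest := sum_le_sum hrow
  rw [sum_add_distrib] at hrest
  rw [← add_sum_erase _ _ (mem_univ i₀), ← add_sum_erase _ _ (mem_univ i₀)]
  linarith

theorem sq_trace_sub_diag_le (H : Matrix ι ι ℝ) (i₀ : ι) :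
    (H.trace - H i₀ i₀) ^ 2 ≤ (Fintype.card ι - 1 : ℝ) * ∑ j ∈ univ.erase i₀, H j j ^ 2 := by
  have htr : H.trace - H i₀ i₀ = ∑ j ∈ univ.erase i₀, H j j := by
    rw [trace, ← add_sum_erase _ _ (mem_univ i₀), diag_apply, add_sub_cancel_left]; rfl
  have h := sq_sum_le_card_mul_sum_sq (s := univ.erase i₀) (f := fun j => H j j)
  rwa [card_erase_of_mem (mem_univ i₀), card_univ,
    Nat.cast_sub (Fintype.card_pos_iff.mpr ⟨i₀⟩), Nat.cast_one, ← htr] at h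

end Matrix

/-- **Hessian estimate (inequality (3.4)).** Let `n ≥ 2` and let `H` be a real
symmetric `n × n` matrix.  For any real constants `k > n` and `c` with
`trace H = c`, one has `∑_{i,j} h_{ij}² ≥ (k/(k-1)) ∑_j h_{1j}² - c²/(k-n)`,
where the second sum is over the first row of `H`. -/
theorem symmetric_matrix_frobenius_estimate
    (n : ℕ) (hn : 2 ≤ n) (H : Matrix (Fin n) (Fin n) ℝ) (hH : H.IsSymm)
    (k c : ℝ) (hk : (n : ℝ) < k) (htr : Matrix.trace H = c) :
    ∑ i : Fin n, ∑ j : Fin n, (H i j) ^ 2 ≥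
      k / (k - 1) * (∑ j : Fin n, (H ⟨0, by omega⟩ j) ^ 2) - c ^ 2 / (k - n) := by
  set i₀ : Fin n := ⟨0, by omega⟩
  set a := H i₀ i₀
  set S := ∑ j ∈ univ.erase i₀, H i₀ j ^ 2
  set T := ∑ j ∈ univ.erase i₀, H j j ^ 2
  have hn' : (2 : ℝ) ≤ n := by exact_mod_cast hn
  have hS : 0 ≤ S := sum_nonneg fun _ _ => sq_nonneg _
  have hdiag : (c - a) ^ 2 / (n - 1) ≤ T := by
    rw [div_le_iff₀' (by linarith), ← htr]
    simpa only [Fintype.card_fin] using H.sq_trace_sub_diag_le i₀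
  have hcs : a ^ 2 / (k - 1) ≤ (c - a) ^ 2 / (n - 1) + c ^ 2 / (k - n) := by
    convert add_sq_div_add_le_sq_div_add_sq_div (x := c - a) (y := -c) (p := n - 1) (q := k - n)
      (by linarith) (by linarith) using 2 <;> ring
  have hk2 : k / (k - 1) ≤ 2 := by rw [div_le_iff₀ (by linarith)]; linarith
  rw [← add_sum_erase _ (fun j => H i₀ j ^ 2) (mem_univ i₀), ge_iff_le]
  calc k / (k - 1) * (a ^ 2 + S) - c ^ 2 / (k - n)
      = a ^ 2 + a ^ 2 / (k - 1) + k / (k - 1) * S - c ^ 2 / (k - n) := by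
        field_simp [show k - 1 ≠ 0 by linarith]; ring
    _ ≤ a ^ 2 + (T + c ^ 2 / (k - n)) + 2 * S - c ^ 2 / (k - n) := by
        gcongr; linarith
    _ = a ^ 2 + 2 * S + T := by ring
    _ ≤ ∑ i, ∑ j, H i j ^ 2 := hH.sq_add_two_mul_sum_sq_add_sum_sq_diag_le i₀
end
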